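/- arXiv:2405.03982 — 4 statements merged into one kernel-verified Lean document; each statement's English description precedes it below -/
import Mathlib

section
/- Let n ≥ 1, a ∈ (0,∞], and let F be admissible on [0,a) with lim_{r→0+} F(r) > -∞. Let a' ∈ (0,a) and let ψ = a'·1_{B(0,1)} be a' times the indicator function of the open unit ball in ℝⁿ. Then the heat evolution e^{Δ}ψ at time t = 1 is not F-concave in ℝⁿ; that is, there exist y, z ∈ ℝⁿ and τ ∈ (0,1) such that F((e^{Δ}ψ)((1-τ)y+τz)) < (1-τ)·F((e^{Δ}ψ)(y)) + τ·F((e^{Δ}ψ)(z)). -/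
/-!
A bounded-below function `G = F ∘ u` with `G z < G x` violates the concavity inequality: choose
`y` on the ray from `x` through `z` so far out that `z = (1 - τ) x + τ y` with `τ` small; then
`(1 - τ) G x + τ G y ≥ (1 - τ) G x + τ b > G z`. Here `u = e^{Δ}ψ` takes values in `(0, a']`, so
`G` is real-valued and bounded below by the hypothesis on `F`, and `u z < u 0` for `‖z‖ = 2`
because every point of the unit ball is closer to `0` than to `z`.
-/

open MeasureTheory Real Set Filter

noncomputable section

abbrev Euc (n : ℕ) := EuclideanSpace ℝ (Fin n)

noncomputable def heatFlow (n : ℕ) (t : ℝ) (φ : Euc n → ℝ) (x : Euc n) : ℝ :=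
  (4 * Real.pi * t) ^ (-(n : ℝ) / 2) * ∫ y, Real.exp (-‖x - y‖ ^ 2 / (4 * t)) * φ y

/-- `f` is `F`-concave on `Ω` (extended-real valued inequality). -/
def FConcaveOn {V : Type*} [AddCommGroup V] [Module ℝ V]
    (Ω : Set V) (F : ℝ → EReal) (f : V → ℝ) : Prop :=
  ∀ x ∈ Ω, ∀ y ∈ Ω, ∀ τ : ℝ, τ ∈ Set.Ioo (0:ℝ) 1 →
    ((1 - τ : ℝ) : EReal) * F (f x) + ((τ : ℝ) : EReal) * F (f y)
      ≤ F (f ((1 - τ) • x + τ • y))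

/-- `F` is admissible on `[0, a)`. -/
def Admissible (a : EReal) (F : ℝ → EReal) : Prop :=
  0 < a ∧ F 0 = ⊥ ∧
  ContinuousOn F {r : ℝ | 0 < r ∧ (r : EReal) < a} ∧
  (∀ r : ℝ, 0 < r → (r : EReal) < a → F r ≠ ⊥ ∧ F r ≠ ⊤) ∧
  StrictMonoOn F {r : ℝ | 0 ≤ r ∧ (r : EReal) < a}

/-- extended-real logarithm with `log 0 = -∞`. -/
noncomputable def elog (r : ℝ) : EReal := if 0 < r then (Real.log r : EReal) else ⊥

noncomputable def Efun (s : ℝ) : ℝ :=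
  (4 * Real.pi) ^ (-(1:ℝ) / 2) * ∫ s' in Set.Ioi (0:ℝ), Real.exp (-(s - s') ^ 2 / 4)

noncomputable def Hfun : ℝ → ℝ := Function.invFun Efun

noncomputable def Ha (a : EReal) (r : ℝ) : EReal :=
  if 0 < r then
    (if a = ⊤ then (Real.log r : EReal) else (Hfun (r / a.toReal) : EReal))
  else ⊥

theorem exists_lt_convexCombination_of_bddBelow {V : Type*} [AddCommGroup V] [Module ℝ V]
    {G : V → ℝ} {b : ℝ} (hb : ∀ x, b ≤ G x) {x z : V} (hzx : G z < G x) :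
    ∃ y : V, ∃ τ ∈ Ioo (0 : ℝ) 1, G ((1 - τ) • x + τ • y) < (1 - τ) * G x + τ * G y := by
  have hbx : 0 < G x - b := by linarith [hb z]
  set τ := (G x - G z) / (2 * (G x - b)) with hτ
  have hτ0 : 0 < τ := by positivity
  have hτ1 : τ < 1 := by rw [div_lt_one (by positivity)]; linarith [hb z]
  refine ⟨x + τ⁻¹ • (z - x), τ, ⟨hτ0, hτ1⟩, ?_⟩
  have hcomb : (1 - τ) • x + τ • (x + τ⁻¹ • (z - x)) = z := by
    rw [smul_add, smul_smul, mul_inv_cancel₀ hτ0.ne', one_smul]; module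
  have hτb : τ * (G x - b) = (G x - G z) / 2 := by rw [hτ]; field_simp
  rw [hcomb]
  nlinarith [hb (x + τ⁻¹ • (z - x))]

theorem setIntegral_lt_setIntegral_of_forall_lt {X : Type*} [MeasurableSpace X] {μ : Measure X}
    {s : Set X} {f g : X → ℝ} (hf : IntegrableOn f s μ) (hg : IntegrableOn g s μ)
    (hs : MeasurableSet s) (hμs : μ s ≠ 0) (hfg : ∀ x ∈ s, f x < g x) :
    ∫ x in s, f x ∂μ < ∫ x in s, g x ∂μ := by
  rw [← sub_pos, ← integral_sub hg hf]
  have hsupp : (Function.support fun x => g x - f x) ∩ s = s :=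
    inter_eq_right.2 fun x hx => (sub_pos.2 (hfg x hx)).ne'
  rw [setIntegral_pos_iff_support_of_nonneg_ae
    ((ae_restrict_iff' hs).2 (.of_forall fun x hx => (sub_pos.2 (hfg x hx)).le)) (hg.sub hf),
    hsupp]
  exact pos_iff_ne_zero.2 hμs

section HeatKernel

variable {n : ℕ} {t : ℝ}

theorem integral_exp_neg_norm_sub_sq_div (ht : 0 < t) (x : Euc n) :
    ∫ y, exp (-‖x - y‖ ^ 2 / (4 * t)) = (4 * π * t) ^ ((n : ℝ) / 2) := by
  have hb : (0 : ℝ) < (4 * t)⁻¹ := by positivity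
  have h := integral_sub_left_eq_self (fun v : Euc n => exp (-(4 * t)⁻¹ * ‖v‖ ^ 2)) volume x
  simp only [GaussianFourier.integral_rexp_neg_mul_sq_norm hb, finrank_euclideanSpace_fin,
    div_inv_eq_mul, show π * (4 * t) = 4 * π * t by ring] at h
  rw [← h]
  congr with y
  ring_nf

theorem integrable_exp_neg_norm_sub_sq_div (ht : 0 < t) (x : Euc n) :
    Integrable fun y : Euc n => exp (-‖x - y‖ ^ 2 / (4 * t)) :=
  .of_integral_ne_zero (by rw [integral_exp_neg_norm_sub_sq_div ht]; positivity)

theorem heatFlow_indicator_const {s : Set (Euc n)} (hs : MeasurableSet s) (c : ℝ) (x : Euc n) :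
    heatFlow n t (s.indicator fun _ => c) x
      = (4 * π * t) ^ (-(n : ℝ) / 2) * ((∫ y in s, exp (-‖x - y‖ ^ 2 / (4 * t))) * c) := by
  rw [heatFlow, ← integral_mul_const, ← integral_indicator hs]
  congr 2 with y
  rw [indicator_mul_right]

variable {s : Set (Euc n)} {c : ℝ}

theorem heatFlow_indicator_const_pos (ht : 0 < t) (hs : MeasurableSet s) (hs0 : volume s ≠ 0)
    (hc : 0 < c) (x : Euc n) : 0 < heatFlow n t (s.indicator fun _ => c) x := by
  have hI : 0 < ∫ y in s, exp (-‖x - y‖ ^ 2 / (4 * t)) := by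
    rw [setIntegral_pos_iff_support_of_nonneg_ae (.of_forall fun _ => (exp_pos _).le)
      (integrable_exp_neg_norm_sub_sq_div ht x).integrableOn]
    simpa [Function.support, pos_iff_ne_zero] using hs0
  rw [heatFlow_indicator_const hs]
  positivity

theorem heatFlow_indicator_const_le (ht : 0 < t) (hs : MeasurableSet s) (hc : 0 ≤ c)
    (x : Euc n) : heatFlow n t (s.indicator fun _ => c) x ≤ c := by
  have hI : ∫ y in s, exp (-‖x - y‖ ^ 2 / (4 * t)) ≤ (4 * π * t) ^ ((n : ℝ) / 2) :=
    integral_exp_neg_norm_sub_sq_div ht x ▸ setIntegral_le_integral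
      (integrable_exp_neg_norm_sub_sq_div ht x) (.of_forall fun _ => (exp_pos _).le)
  have hC : (4 * π * t) ^ (-(n : ℝ) / 2) * (4 * π * t) ^ ((n : ℝ) / 2) = 1 := by
    rw [← rpow_add (by positivity), neg_div, neg_add_cancel, rpow_zero]
  rw [heatFlow_indicator_const hs]
  calc _ ≤ (4 * π * t) ^ (-(n : ℝ) / 2) * ((4 * π * t) ^ ((n : ℝ) / 2) * c) := by gcongr
    _ = c := by rw [← mul_assoc, hC, one_mul]

theorem heatFlow_indicator_const_lt_of_forall_dist_lt (ht : 0 < t) (hs : MeasurableSet s)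
    (hs0 : volume s ≠ 0) (hc : 0 < c) {x x' : Euc n} (hxx' : ∀ y ∈ s, ‖x - y‖ < ‖x' - y‖) :
    heatFlow n t (s.indicator fun _ => c) x' < heatFlow n t (s.indicator fun _ => c) x := by
  have hI :
      ∫ y in s, exp (-‖x' - y‖ ^ 2 / (4 * t)) < ∫ y in s, exp (-‖x - y‖ ^ 2 / (4 * t)) := by
    refine setIntegral_lt_setIntegral_of_forall_lt
      (integrable_exp_neg_norm_sub_sq_div ht x').integrableOn
      (integrable_exp_neg_norm_sub_sq_div ht x).integrableOn hs hs0 fun y hy => ?_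
    have := hxx' y hy
    gcongr
  rw [heatFlow_indicator_const hs, heatFlow_indicator_const hs]
  gcongr

end HeatKernel

/-- If `F` is admissible on `[0,a)` with `lim_{r→0+} F(r) > -∞`, then the heat
evolution at time `1` of `ψ = a'·1_{B(0,1)}` (with `a' ∈ (0,a)`) is not `F`-concave in `ℝⁿ`. -/
theorem stmt0 (n : ℕ) (hn : 1 ≤ n) (a : EReal) (F : ℝ → EReal)
    (hF : Admissible a F)
    (hlim : ∃ b : ℝ, ∀ r : ℝ, 0 < r → (r : EReal) < a → (b : EReal) ≤ F r)
    (a' : ℝ) (ha'0 : 0 < a') (ha'a : (a' : EReal) < a)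
    (ψ : Euc n → ℝ) (hψ : ψ = (Metric.ball (0 : Euc n) 1).indicator fun _ => a') :
    ∃ y z : Euc n, ∃ τ : ℝ, τ ∈ Set.Ioo (0:ℝ) 1 ∧
      F (heatFlow n 1 ψ ((1 - τ) • y + τ • z)) <
        ((1 - τ : ℝ) : EReal) * F (heatFlow n 1 ψ y)
          + ((τ : ℝ) : EReal) * F (heatFlow n 1 ψ z) := by
  obtain ⟨-, -, -, hfin, hmono⟩ := hF
  obtain ⟨b, hb⟩ := hlim
  subst hψ
  set u := heatFlow n 1 ((Metric.ball (0 : Euc n) 1).indicator fun _ => a')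
  have hball : volume (Metric.ball (0 : Euc n) 1) ≠ 0 :=
    (Metric.measure_ball_pos _ _ one_pos).ne'
  have hu_pos : ∀ x, 0 < u x :=
    heatFlow_indicator_const_pos one_pos measurableSet_ball hball ha'0
  have hu_lt : ∀ x, (u x : EReal) < a := fun x => lt_of_le_of_lt
    (EReal.coe_le_coe_iff.2 (heatFlow_indicator_const_le one_pos measurableSet_ball ha'0.le x))
    ha'a
  have hG : ∀ x, ((F (u x)).toReal : EReal) = F (u x) := fun x =>
    EReal.coe_toReal (hfin _ (hu_pos x) (hu_lt x)).2 (hfin _ (hu_pos x) (hu_lt x)).1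
  have : NeZero n := ⟨by omega⟩
  obtain ⟨z, hz⟩ := exists_norm_eq (Euc n) (zero_le_two : (0 : ℝ) ≤ 2)
  have hu_z : u z < u 0 :=
    heatFlow_indicator_const_lt_of_forall_dist_lt one_pos measurableSet_ball hball ha'0
      fun y hy => by
        rw [zero_sub, norm_neg]
        linarith [norm_sub_norm_le z y, mem_ball_zero_iff.1 hy]
  have hF_z : F (u z) < F (u 0) := hmono ⟨(hu_pos z).le, hu_lt z⟩ ⟨(hu_pos 0).le, hu_lt 0⟩ hu_z
  obtain ⟨y, τ, hτ, hlt⟩ := exists_lt_convexCombination_of_bddBelow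
    (G := fun x => (F (u x)).toReal) (b := b)
    (fun x => EReal.coe_le_coe_iff.1 ((hG x).symm ▸ hb _ (hu_pos x) (hu_lt x)))
    (x := 0) (z := z) (EReal.coe_lt_coe_iff.1 (by rwa [hG, hG]))
  refine ⟨0, y, τ, hτ, ?_⟩
  have hlt_ereal := EReal.coe_lt_coe_iff.2 hlt
  push_cast at hlt_ereal
  rwa [hG, hG, hG] at hlt_ereal
end
end

section
/- Let n ≥ 1, a ∈ (0,∞], and let F₁ and F₂ be admissible on [0,a). If every F₂-concave function f: ℝⁿ → [0,a) is F₁-concave, and lim_{r→0+} F₂(r) = -∞, then lim_{r→0+} F₁(r) = -∞. -/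
open MeasureTheory Real Set Filter

noncomputable section

/-- if `F₁`-concavity is weaker than `F₂`-concavity in `A(a)` and
`lim_{r→0+} F₂(r) = -∞`, then `lim_{r→0+} F₁(r) = -∞`. -/
theorem stmt5 (n : ℕ) (hn : 1 ≤ n) (a : EReal) (F₁ F₂ : ℝ → EReal)
    (h₁ : Admissible a F₁) (h₂ : Admissible a F₂)
    (hw : ∀ f : Euc n → ℝ, (∀ x, 0 ≤ f x ∧ (f x : EReal) < a) →
      FConcaveOn Set.univ F₂ f → FConcaveOn Set.univ F₁ f)
    (hlim₂ : Filter.Tendsto F₂ (nhdsWithin 0 (Set.Ioi 0)) (nhds ⊥)) :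
    Filter.Tendsto F₁ (nhdsWithin 0 (Set.Ioi 0)) (nhds ⊥) := by
  classical
  obtain ⟨ha, -, -, hF1real, hF1mono⟩ := h₁
  obtain ⟨-, -, hF2cont, hF2real, hF2mono⟩ := h₂
  -- pick b with 0 < b and (b : EReal) < a
  obtain ⟨b', hb'0, hb'a⟩ := exists_between ha
  lift b' to ℝ using ⟨(hb'a.trans_le le_top).ne, (lt_trans (EReal.bot_lt_zero) hb'0).ne'⟩ with b hb
  have hb0 : (0:ℝ) < b := by exact_mod_cast hb'0
  have hba : (b : EReal) < a := hb'a
  -- F₂ b is a real number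
  set c : ℝ := (F₂ b).toReal with hc
  have hF2b : F₂ b = (c : EReal) := by
    obtain ⟨h1, h2⟩ := hF2real b hb0 hba
    exact (EReal.coe_toReal h2 h1).symm
  -- existence of preimages
  have ex : ∀ t : ℝ, 0 < t → ∃ r : ℝ, 0 < r ∧ r < b ∧ F₂ r = ((c - t : ℝ) : EReal) := by
    intro t ht
    -- find ε ∈ (0, b) with F₂ ε < c - t
    have h1 : ∀ᶠ r in nhdsWithin 0 (Set.Ioi 0), F₂ r < ((c - t : ℝ) : EReal) :=
      hlim₂.eventually_lt_const (by exact_mod_cast EReal.bot_lt_coe _)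
    have h2 : Set.Ioo (0:ℝ) b ∈ nhdsWithin 0 (Set.Ioi 0) :=
      Ioo_mem_nhdsGT_of_mem ⟨le_refl 0, hb0⟩
    obtain ⟨ε, hεlt, hε0, hεb⟩ := (h1.and h2).exists
    obtain ⟨hε0, hεb⟩ : (0:ℝ) < ε ∧ ε < b := ⟨hε0, hεb⟩
    set φ : ℝ → ℝ := fun r => (F₂ r).toReal with hφdef
    have hsub : Set.Icc ε b ⊆ {r : ℝ | 0 < r ∧ (r:EReal) < a} := fun r hr =>
      ⟨hε0.trans_le hr.1, (EReal.coe_le_coe_iff.mpr hr.2).trans_lt hba⟩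
    have hcont : ContinuousOn φ (Set.Icc ε b) := by
      apply EReal.continuousOn_toReal.comp (hF2cont.mono hsub)
      intro r hr
      obtain ⟨hn1, hn2⟩ := hF2real r (hsub hr).1 (hsub hr).2
      simp [hn1, hn2]
    have hφb : φ b = c := rfl
    have hεa : (ε : EReal) < a := (EReal.coe_lt_coe_iff.mpr hεb).trans hba
    have hφε : φ ε < c - t := by
      obtain ⟨hn1, hn2⟩ := hF2real ε hε0 hεa
      rw [← EReal.coe_toReal hn2 hn1] at hεlt
      exact_mod_cast hεlt
    have hmem : c - t ∈ Set.Icc (φ ε) (φ b) := ⟨hφε.le, by rw [hφb]; linarith⟩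
    obtain ⟨r, hrI, hφr⟩ := intermediate_value_Icc hεb.le hcont hmem
    refine ⟨r, hε0.trans_le hrI.1, ?_, ?_⟩
    · rcases eq_or_lt_of_le hrI.2 with h | h
      · exfalso; rw [h, hφb] at hφr; linarith
      · exact h
    · obtain ⟨hn1, hn2⟩ := hF2real r (hε0.trans_le hrI.1)
        ((EReal.coe_le_coe_iff.mpr hrI.2).trans_lt hba)
      rw [← hφr]
      exact (EReal.coe_toReal hn2 hn1).symm
  -- the F₂-concave witness function
  set g : ℝ → ℝ := fun t => if h : 0 < t then (ex t h).choose else b with hgdef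
  have hg0 : ∀ t, 0 < g t := by
    intro t
    by_cases h : 0 < t
    · simp only [hgdef, dif_pos h]; exact (ex t h).choose_spec.1
    · simp only [hgdef, dif_neg h]; exact hb0
  have hgb : ∀ t, g t ≤ b := by
    intro t
    by_cases h : 0 < t
    · simp only [hgdef, dif_pos h]; exact (ex t h).choose_spec.2.1.le
    · simp only [hgdef, dif_neg h]
      exact le_rfl
  have hglt : ∀ t : ℝ, 0 < t → g t < b := by
    intro t h
    simp only [hgdef, dif_pos h]; exact (ex t h).choose_spec.2.1
  have hgF2 : ∀ t, F₂ (g t) = ((c - max t 0 : ℝ) : EReal) := by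
    intro t
    by_cases h : 0 < t
    · simp only [hgdef, dif_pos h]
      rw [(ex t h).choose_spec.2.2, max_eq_left h.le]
    · simp only [hgdef, dif_neg h]
      rw [max_eq_right (not_lt.mp h), sub_zero]
      exact hF2b
  have hga : ∀ t : ℝ, (g t : EReal) < a := fun t =>
    (EReal.coe_le_coe_iff.mpr (hgb t)).trans_lt hba
  set i : Fin n := ⟨0, hn⟩ with hi
  have hfr : ∀ x : Euc n, 0 ≤ (fun x : Euc n => g (x i)) x ∧
      (((fun x : Euc n => g (x i)) x : ℝ) : EReal) < a :=
    fun x => ⟨(hg0 _).le, hga _⟩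
  have hF2f : FConcaveOn Set.univ F₂ (fun x : Euc n => g (x i)) := by
    rintro x - y - τ ⟨hτ0, hτ1⟩
    have hz : ((1 - τ) • x + τ • y) i = (1 - τ) * x i + τ * y i := by
      simp [PiLp.add_apply, PiLp.smul_apply, smul_eq_mul]
    simp only [hz, hgF2]
    rw [← EReal.coe_mul, ← EReal.coe_mul, ← EReal.coe_add, EReal.coe_le_coe_iff]
    have hm : max ((1 - τ) * x i + τ * y i) 0
        ≤ (1 - τ) * max (x i) 0 + τ * max (y i) 0 := by
      apply max_le
      · exact add_le_add
          (mul_le_mul_of_nonneg_left (le_max_left _ _) (by linarith))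
          (mul_le_mul_of_nonneg_left (le_max_left _ _) hτ0.le)
      · exact add_nonneg (mul_nonneg (by linarith) (le_max_right _ _))
          (mul_nonneg hτ0.le (le_max_right _ _))
    nlinarith [hm]
  have hf1 := hw _ hfr hF2f
  -- real-valued version of F₁ ∘ g
  set H : ℝ → ℝ := fun t => (F₁ (g t)).toReal with hHdef
  have hF1g : ∀ u : ℝ, F₁ (g u) = ((H u : ℝ) : EReal) := by
    intro u
    obtain ⟨hn1, hn2⟩ := hF1real (g u) (hg0 u) (hga u)
    exact (EReal.coe_toReal hn2 hn1).symm
  have hmid : ∀ s t : ℝ, H s + H t ≤ 2 * H ((s + t) / 2) := by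
    intro s t
    have h12 : (1/2 : ℝ) ∈ Set.Ioo (0:ℝ) 1 := by norm_num
    have := hf1 (EuclideanSpace.single i s) (Set.mem_univ _)
      (EuclideanSpace.single i t) (Set.mem_univ _) (1/2) h12
    have hxs : (EuclideanSpace.single i s) i = s := by simp
    have hxt : (EuclideanSpace.single i t) i = t := by simp
    have hz : ((1 - 1/2 : ℝ) • EuclideanSpace.single i s
        + (1/2 : ℝ) • EuclideanSpace.single i t) i = (s + t) / 2 := by
      simp [PiLp.add_apply, PiLp.smul_apply, smul_eq_mul]
      ring
    simp only [hxs, hxt, hz] at this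
    rw [hF1g s, hF1g t, hF1g ((s+t)/2)] at this
    rw [← EReal.coe_mul, ← EReal.coe_mul, ← EReal.coe_add, EReal.coe_le_coe_iff] at this
    linarith
  set δ : ℝ := H 0 - H 1 with hδdef
  have hδ : 0 < δ := by
    have hg0b : g 0 = b := by simp [hgdef]
    have hlt : g 1 < g 0 := by rw [hg0b]; exact hglt 1 one_pos
    have := hF1mono ⟨(hg0 1).le, hga 1⟩ ⟨(hg0 0).le, hga 0⟩ hlt
    rw [hF1g 1, hF1g 0] at this
    have : H 1 < H 0 := by exact_mod_cast this
    linarith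
  have hdec : ∀ k : ℕ, H ((k:ℝ) + 1) ≤ H (k:ℝ) - δ := by
    intro k
    induction k with
    | zero => simp only [Nat.cast_zero, zero_add]; rw [hδdef]; linarith
    | succ k ih =>
      have := hmid (k:ℝ) ((k:ℝ) + 2)
      have harg : ((k:ℝ) + ((k:ℝ) + 2)) / 2 = (k:ℝ) + 1 := by ring
      rw [harg] at this
      push_cast
      push_cast at ih
      have h2 : ((k:ℝ) + 1) + 1 = (k:ℝ) + 2 := by ring
      rw [h2]
      linarith
  have hsum : ∀ k : ℕ, H (k:ℝ) ≤ H 0 - k * δ := by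
    intro k
    induction k with
    | zero => simp
    | succ k ih =>
      have := hdec k
      push_cast
      linarith
  rw [EReal.tendsto_nhds_bot_iff_real]
  intro M
  obtain ⟨k, hk⟩ := exists_nat_gt ((H 0 - M) / δ)
  have hkM : H (k:ℝ) < M := by
    rw [div_lt_iff₀ hδ] at hk
    have := hsum k
    nlinarith
  filter_upwards [Ioo_mem_nhdsGT_of_mem
    (⟨le_refl (0:ℝ), hg0 (k:ℝ)⟩ : (0:ℝ) ∈ Set.Ico 0 (g (k:ℝ)))] with r hr
  have hra : (r : EReal) < a :=
    (EReal.coe_lt_coe_iff.mpr (hr.2.trans_le (hgb _))).trans hba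
  have hlt : F₁ r < F₁ (g (k:ℝ)) :=
    hF1mono ⟨hr.1.le, hra⟩ ⟨(hg0 _).le, hga _⟩ hr.2
  refine hlt.trans ?_
  rw [hF1g (k:ℝ)]
  exact_mod_cast hkM
end
end

section
/- Let n ≥ 1, a ∈ (0,∞], let F₁ and F₂ be admissible on [0,a), and let Ω be a nonempty open convex subset of ℝⁿ. Then every F₂-concave function f: Ω → [0,a) is F₁-concave in Ω if and only if every F₂-concave function g: ℝ → [0,a) is F₁-concave in ℝ. -/
open MeasureTheory Real Set Filter

noncomputable section

/-!
Given `x, y ∈ Ω`, restrict an `F₂`-concave `f` to the segment `[x, y]`, parametrised affinely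
by `[0, 1]`, and extend it by zero to `ℝ`: since `F₂ 0 = -∞`, every concavity inequality
involving a point outside `[0, 1]` has left side `-∞`, so the extension is `F₂`-concave on `ℝ`.
Conversely, precomposing an `F₂`-concave `g : ℝ → ℝ` with an affine map that sends two distinct
points of `Ω` to prescribed reals `u, v` gives an `F₂`-concave function on `Ω`.
-/

open scoped Topology

section FConcave

variable {V W : Type*} [AddCommGroup V] [Module ℝ V] [AddCommGroup W] [Module ℝ W]

theorem FConcaveOn.comp_affineMap {F : ℝ → EReal} {Ω : Set V} {s : Set W} {f : V → ℝ}
    (hf : FConcaveOn Ω F f) (A : W →ᵃ[ℝ] V) (hA : MapsTo A s Ω) :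
    FConcaveOn s F (f ∘ A) := by
  intro x hx y hy τ hτ
  have hcomb : A ((1 - τ) • x + τ • y) = (1 - τ) • A x + τ • A y := by
    simp only [← AffineMap.lineMap_apply_module, AffineMap.apply_lineMap]
  simpa only [Function.comp_apply, hcomb] using hf (A x) (hA hx) (A y) (hA hy) τ hτ

theorem FConcaveOn.indicator {F : ℝ → EReal} {s : Set V} {f : V → ℝ} (hs : Convex ℝ s)
    (hF : F 0 = ⊥) (hf : FConcaveOn s F f) : FConcaveOn univ F (s.indicator f) := by
  intro x _ y _ τ ⟨hτ₀, hτ₁⟩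
  by_cases hx : x ∈ s
  · by_cases hy : y ∈ s
    · have hxy : (1 - τ) • x + τ • y ∈ s := hs hx hy (by linarith) hτ₀.le (by ring)
      simpa only [indicator_of_mem hx, indicator_of_mem hy, indicator_of_mem hxy]
        using hf x hx y hy τ ⟨hτ₀, hτ₁⟩
    · rw [indicator_of_notMem hy, hF, EReal.coe_mul_bot_of_pos hτ₀, EReal.add_bot]
      exact bot_le
  · rw [indicator_of_notMem hx, hF, EReal.coe_mul_bot_of_pos (by linarith), EReal.bot_add]
    exact bot_le

theorem exists_affineMap_apply_eq {p q : V} (hpq : p ≠ q) (u v : ℝ) :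
    ∃ A : V →ᵃ[ℝ] ℝ, A p = u ∧ A q = v := by
  obtain ⟨φ, hφ⟩ := Module.Projective.exists_dual_eq_one ℝ (sub_ne_zero.mpr hpq.symm)
  refine ⟨((v - u) • φ).toAffineMap + AffineMap.const ℝ V (u - (v - u) * φ p), ?_, ?_⟩
  · simp
  · rw [map_sub] at hφ
    simp only [AffineMap.coe_add, Pi.add_apply, LinearMap.coe_toAffineMap, LinearMap.smul_apply,
      smul_eq_mul, AffineMap.const_apply]
    linear_combination (v - u) * hφ

def FConcavityImplies (a : EReal) (F₁ F₂ : ℝ → EReal) (Ω : Set V) : Prop :=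
  ∀ f : V → ℝ, (∀ x ∈ Ω, 0 ≤ f x ∧ (f x : EReal) < a) → FConcaveOn Ω F₂ f → FConcaveOn Ω F₁ f

variable {a : EReal} {F₁ F₂ : ℝ → EReal} {Ω : Set V}

theorem FConcavityImplies.univ_real (hΩ : Ω.Nontrivial) (h : FConcavityImplies a F₁ F₂ Ω) :
    FConcavityImplies a F₁ F₂ (univ : Set ℝ) := by
  intro g hg hg₂ u _ v _ τ hτ
  obtain ⟨p, hp, q, hq, hpq⟩ := hΩ
  obtain ⟨A, hAp, hAq⟩ := exists_affineMap_apply_eq hpq u v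
  have hgA := h (g ∘ A) (fun x _ ↦ hg (A x) (mem_univ _))
    (hg₂.comp_affineMap A (mapsTo_univ _ _)) p hp q hq τ hτ
  simpa only [Function.comp_apply, ← AffineMap.lineMap_apply_module, AffineMap.apply_lineMap,
    hAp, hAq] using hgA

theorem FConcavityImplies.of_univ_real (hconv : Convex ℝ Ω) (hF₂ : F₂ 0 = ⊥) (ha : 0 < a)
    (h : FConcavityImplies a F₁ F₂ (univ : Set ℝ)) : FConcavityImplies a F₁ F₂ Ω := by
  intro f hf hf₂ x hx y hy τ hτ
  set ℓ := AffineMap.lineMap (k := ℝ) x y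
  have hℓ : MapsTo ℓ (Icc 0 1) Ω := fun t ht ↦ hconv.lineMap_mem hx hy ht
  set g := (Icc (0 : ℝ) 1).indicator (f ∘ ℓ)
  have hg : ∀ t ∈ (univ : Set ℝ), 0 ≤ g t ∧ (g t : EReal) < a := by
    intro t _
    by_cases ht : t ∈ Icc (0 : ℝ) 1
    · simpa only [g, indicator_of_mem ht, Function.comp_apply] using hf _ (hℓ ht)
    · simpa only [g, indicator_of_notMem ht, le_refl, EReal.coe_zero, true_and] using ha
  have hg₂ : FConcaveOn univ F₂ g := (hf₂.comp_affineMap ℓ hℓ).indicator (convex_Icc 0 1) hF₂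
  have hg₁ := h g hg hg₂ 0 (mem_univ _) 1 (mem_univ _) τ hτ
  have hτ' : τ ∈ Icc (0 : ℝ) 1 := ⟨hτ.1.le, hτ.2.le⟩
  simpa [g, ℓ, hτ', AffineMap.lineMap_apply_module] using hg₁

theorem fConcavityImplies_iff_univ_real (hΩ : Ω.Nontrivial) (hconv : Convex ℝ Ω)
    (hF₂ : F₂ 0 = ⊥) (ha : 0 < a) :
    FConcavityImplies a F₁ F₂ Ω ↔ FConcavityImplies a F₁ F₂ (univ : Set ℝ) :=
  ⟨FConcavityImplies.univ_real hΩ, FConcavityImplies.of_univ_real hconv hF₂ ha⟩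

end FConcave

theorem IsOpen.nontrivial_of_nonempty {X : Type*} [TopologicalSpace X] [∀ x : X, NeBot (𝓝[≠] x)]
    {U : Set X} (hU : IsOpen U) (hne : U.Nonempty) : U.Nontrivial := by
  obtain ⟨x, hx⟩ := hne
  have hpunct : ∀ᶠ y in 𝓝[≠] x, y ∈ U ∧ y ≠ x :=
    (eventually_nhdsWithin_of_eventually_nhds (hU.mem_nhds hx)).and self_mem_nhdsWithin
  obtain ⟨y, hyU, hyx⟩ := hpunct.exists
  exact ⟨x, hx, y, hyU, Ne.symm hyx⟩

theorem stmt6_general (n : ℕ) (hn : 1 ≤ n) (a : EReal) (F₁ F₂ : ℝ → EReal)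
    (h₂ : Admissible a F₂)
    (Ω : Set (Euc n)) (hne : Ω.Nonempty) (hop : IsOpen Ω) (hconv : Convex ℝ Ω) :
    (∀ f : Euc n → ℝ, (∀ x ∈ Ω, 0 ≤ f x ∧ (f x : EReal) < a) →
        FConcaveOn Ω F₂ f → FConcaveOn Ω F₁ f) ↔
    (∀ g : ℝ → ℝ, (∀ x : ℝ, 0 ≤ g x ∧ (g x : EReal) < a) →
        FConcaveOn (Set.univ : Set ℝ) F₂ g → FConcaveOn (Set.univ : Set ℝ) F₁ g) := by
  obtain ⟨ha, hF₂, -⟩ := h₂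
  have : Nonempty (Fin n) := Fin.pos_iff_nonempty.mp hn
  simpa only [FConcavityImplies, mem_univ, forall_const] using
    fConcavityImplies_iff_univ_real (hop.nontrivial_of_nonempty hne) hconv hF₂ ha

/-- comparison of `F₁`- and `F₂`-concavity on a nonempty open convex `Ω ⊆ ℝⁿ`
reduces to the one-dimensional case. -/
theorem stmt6 (n : ℕ) (hn : 1 ≤ n) (a : EReal) (F₁ F₂ : ℝ → EReal)
    (h₁ : Admissible a F₁) (h₂ : Admissible a F₂)
    (Ω : Set (Euc n)) (hne : Ω.Nonempty) (hop : IsOpen Ω) (hconv : Convex ℝ Ω) :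
    (∀ f : Euc n → ℝ, (∀ x ∈ Ω, 0 ≤ f x ∧ (f x : EReal) < a) →
        FConcaveOn Ω F₂ f → FConcaveOn Ω F₁ f) ↔
    (∀ g : ℝ → ℝ, (∀ x : ℝ, 0 ≤ g x ∧ (g x : EReal) < a) →
        FConcaveOn (Set.univ : Set ℝ) F₂ g → FConcaveOn (Set.univ : Set ℝ) F₁ g) :=
  stmt6_general n hn a F₁ F₂ h₂ Ω hne hop hconv
end
end

section
/- Let n ≥ 1 and let Ω be a nonempty open convex subset of ℝⁿ. For any bounded log-concave function f: Ω → [0,∞), there exists a family (f_a)_{a>0} of functions f_a: Ω → [0,a) such that each f_a is H_a-concave in Ω and f_a → f uniformly on Ω as a → ∞ (i.e., sup_{x∈Ω} |f_a(x) − f(x)| → 0). -/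
open MeasureTheory Real Set Filter

noncomputable section

/-!
Since `H_a` inverts `a · E`, the function `a · E(φ(log f))` is `H_a`-concave whenever `f` is
log-concave and `φ` is concave and nondecreasing. The choice `φ(u) = H(eᵘ / a)` would
reproduce `f` exactly, but it is convex; we take instead its tangent line at `log B`, `B ≥ sup f`. With `G(t) = ∫_t^∞ e^{-v²/4} dv` and `t = -H(B / a) → ∞`, the
approximant is `B · G(t + λ(t) Δ) / G(t)`, where `Δ = log B - log f` and `λ = G / |G'|` is the
Mills ratio, while `f = B e^{-Δ}`. The Mills-ratio bounds `2t / (t² + 2) ≤ λ(t) ≤ 2 / t` give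
`G(t + λ(t) Δ) / G(t) → e^{-Δ}` uniformly in `Δ ≥ 0`.
-/

open Topology

def gaussKernel (v : ℝ) : ℝ := exp (-v ^ 2 / 4)

def gaussTail (t : ℝ) : ℝ := ∫ v in Ioi t, gaussKernel v

lemma gaussKernel_pos (v : ℝ) : 0 < gaussKernel v := exp_pos _

lemma gaussKernel_le_one (v : ℝ) : gaussKernel v ≤ 1 :=
  exp_le_one_iff.2 (by nlinarith [sq_nonneg v])

lemma gaussKernel_neg (v : ℝ) : gaussKernel (-v) = gaussKernel v := by
  simp [gaussKernel]

lemma gaussKernel_add (t d : ℝ) :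
    gaussKernel (t + d) = gaussKernel t * exp (-(2 * t * d + d ^ 2) / 4) := by
  rw [gaussKernel, gaussKernel, ← exp_add]
  ring_nf

lemma continuous_gaussKernel : Continuous gaussKernel := by
  unfold gaussKernel; fun_prop

lemma hasDerivAt_gaussKernel (v : ℝ) :
    HasDerivAt gaussKernel (gaussKernel v * (-v / 2)) v := by
  have h : HasDerivAt (fun v : ℝ => -v ^ 2 / 4) (-v / 2) v := by
    refine ((hasDerivAt_pow 2 v).neg.div_const 4).congr_deriv ?_
    ring
  exact h.exp

lemma integrable_gaussKernel : Integrable gaussKernel := by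
  refine (integrable_exp_neg_mul_sq (b := (4 : ℝ)⁻¹) (by norm_num)).congr ?_
  filter_upwards with v
  simp only [gaussKernel]; ring_nf

lemma integral_gaussKernel : ∫ v, gaussKernel v = √(4 * π) := by
  have h : (gaussKernel : ℝ → ℝ) = fun v => exp (-(4 : ℝ)⁻¹ * v ^ 2) := by
    ext v; simp only [gaussKernel]; ring_nf
  rw [h, integral_gaussian, div_inv_eq_mul, mul_comm]

lemma gaussTail_sub_gaussTail (t u : ℝ) :
    gaussTail t - gaussTail u = ∫ v in t..u, gaussKernel v :=
  intervalIntegral.integral_Ioi_sub_Ioi' integrable_gaussKernel.integrableOn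
    integrable_gaussKernel.integrableOn

lemma hasDerivAt_gaussTail (t : ℝ) : HasDerivAt gaussTail (-gaussKernel t) t := by
  have h : gaussTail = fun u => gaussTail 0 - ∫ v in (0 : ℝ)..u, gaussKernel v := by
    ext u; rw [← gaussTail_sub_gaussTail]; ring
  rw [h]
  exact ((intervalIntegral.integral_hasDerivAt_right
    (continuous_gaussKernel.intervalIntegrable _ _)
    (continuous_gaussKernel.stronglyMeasurableAtFilter _ _)
    continuous_gaussKernel.continuousAt).const_sub _)

lemma continuous_gaussTail : Continuous gaussTail :=
  continuous_iff_continuousAt.2 fun t => (hasDerivAt_gaussTail t).continuousAt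

lemma gaussTail_strictAnti : StrictAnti gaussTail :=
  strictAnti_of_deriv_neg fun t => by
    rw [(hasDerivAt_gaussTail t).deriv]; exact neg_neg_of_pos (gaussKernel_pos t)

lemma gaussTail_pos (t : ℝ) : 0 < gaussTail t :=
  lt_of_le_of_lt (setIntegral_nonneg measurableSet_Ioi fun v _ => (gaussKernel_pos v).le)
    (gaussTail_strictAnti (lt_add_one t))

lemma gaussTail_add_gaussTail_neg (t : ℝ) : gaussTail t + gaussTail (-t) = √(4 * π) := by
  have h : gaussTail (-t) = ∫ v in Iic t, gaussKernel v := by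
    rw [gaussTail, ← integral_comp_neg_Iic]
    simp only [gaussKernel_neg]
  rw [h, ← integral_gaussKernel, add_comm]
  exact intervalIntegral.integral_Iic_add_Ioi integrable_gaussKernel.integrableOn
    integrable_gaussKernel.integrableOn

lemma setIntegral_Ioi_le_of_hasDerivAt {F F' g : ℝ → ℝ} {t : ℝ}
    (hF : ∀ x ∈ Ici t, HasDerivAt F (F' x) x) (hF' : IntegrableOn F' (Ioi t))
    (hlim : Tendsto F atTop (𝓝 0)) (hg : IntegrableOn g (Ioi t))
    (hle : ∀ x ∈ Ioi t, g x ≤ -F' x) :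
    ∫ x in Ioi t, g x ≤ F t := by
  calc ∫ x in Ioi t, g x ≤ ∫ x in Ioi t, -F' x :=
        setIntegral_mono_on hg hF'.neg measurableSet_Ioi hle
    _ = F t := by rw [integral_neg, integral_Ioi_of_hasDerivAt_of_tendsto' hF hF' hlim]; ring

lemma le_setIntegral_Ioi_of_hasDerivAt {F F' g : ℝ → ℝ} {t : ℝ}
    (hF : ∀ x ∈ Ici t, HasDerivAt F (F' x) x) (hF' : IntegrableOn F' (Ioi t))
    (hlim : Tendsto F atTop (𝓝 0)) (hg : IntegrableOn g (Ioi t))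
    (hle : ∀ x ∈ Ioi t, -F' x ≤ g x) :
    F t ≤ ∫ x in Ioi t, g x := by
  calc F t = ∫ x in Ioi t, -F' x := by
        rw [integral_neg, integral_Ioi_of_hasDerivAt_of_tendsto' hF hF' hlim]; ring
    _ ≤ ∫ x in Ioi t, g x := setIntegral_mono_on hF'.neg hg measurableSet_Ioi hle

lemma tendsto_mul_gaussKernel_of_le_two_div {φ : ℝ → ℝ} (hφ : ∀ v > 0, 0 ≤ φ v ∧ φ v ≤ 2 / v) :
    Tendsto (fun v => φ v * gaussKernel v) atTop (𝓝 0) := by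
  refine squeeze_zero' (g := fun v => 2 / v) ?_ ?_
    ((tendsto_const_nhds (x := (2 : ℝ))).div_atTop tendsto_id)
  · filter_upwards [eventually_gt_atTop 0] with v hv
    exact mul_nonneg (hφ v hv).1 (gaussKernel_pos v).le
  · filter_upwards [eventually_gt_atTop 0] with v hv
    calc φ v * gaussKernel v ≤ φ v * 1 :=
          mul_le_mul_of_nonneg_left (gaussKernel_le_one v) (hφ v hv).1
      _ ≤ 2 / v := by rw [mul_one]; exact (hφ v hv).2

/-- Upper Mills-ratio bound, from `d/dv (2 / v · g v) = -g v (1 + 2 / v²)`. -/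
lemma gaussTail_le (t : ℝ) (ht : 0 < t) : gaussTail t ≤ 2 / t * gaussKernel t := by
  have hderiv (v : ℝ) (hv : 0 < v) :
      HasDerivAt (fun v => 2 / v * gaussKernel v) (-(gaussKernel v * (1 + 2 / v ^ 2))) v := by
    refine (((hasDerivAt_inv hv.ne').const_mul 2).mul (hasDerivAt_gaussKernel v)).congr_deriv ?_
    field_simp; ring
  have hint : IntegrableOn (fun v => -(gaussKernel v * (1 + 2 / v ^ 2))) (Ioi t) := by
    refine (integrable_gaussKernel.const_mul (1 + 2 / t ^ 2)).integrableOn.mono' ?_ ?_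
    · exact (continuous_gaussKernel.measurable.mul (by fun_prop)).neg.aestronglyMeasurable
    · filter_upwards [ae_restrict_mem measurableSet_Ioi] with v (hv : t < v)
      have : 2 / v ^ 2 ≤ 2 / t ^ 2 := by gcongr
      rw [norm_neg, norm_of_nonneg (by have := gaussKernel_pos v; positivity), mul_comm]
      gcongr
      exact (gaussKernel_pos v).le
  refine setIntegral_Ioi_le_of_hasDerivAt (fun v hv => hderiv v (ht.trans_le hv)) hint
    (tendsto_mul_gaussKernel_of_le_two_div fun v hv => ⟨by positivity, le_rfl⟩)
    integrable_gaussKernel.integrableOn fun v hv => ?_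
  have := gaussKernel_pos v
  have : 0 < v := ht.trans hv
  rw [neg_neg]
  nlinarith [show 0 < 2 / v ^ 2 by positivity]

/-- Lower Mills-ratio bound, from
`d/dv (2v / (v² + 2) · g v) = -g v (v⁴ + 4v² - 4) / (v² + 2)²`. -/
lemma le_gaussTail (t : ℝ) : 2 * t / (t ^ 2 + 2) * gaussKernel t ≤ gaussTail t := by
  have hderiv (v : ℝ) : HasDerivAt (fun v => 2 * v / (v ^ 2 + 2) * gaussKernel v)
      (-(gaussKernel v * ((v ^ 4 + 4 * v ^ 2 - 4) / (v ^ 2 + 2) ^ 2))) v := by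
    have hq : HasDerivAt (fun v : ℝ => 2 * v / (v ^ 2 + 2))
        ((2 * (v ^ 2 + 2) - 2 * v * (2 * v)) / (v ^ 2 + 2) ^ 2) v :=
      (((hasDerivAt_id v).const_mul 2).div ((hasDerivAt_pow 2 v).add_const 2)
        (by positivity)).congr_deriv (by simp)
    refine (hq.mul (hasDerivAt_gaussKernel v)).congr_deriv ?_
    field_simp; ring
  have hq_le (v : ℝ) : |(v ^ 4 + 4 * v ^ 2 - 4) / (v ^ 2 + 2) ^ 2| ≤ 1 := by
    rw [abs_div, abs_of_pos (show (0 : ℝ) < (v ^ 2 + 2) ^ 2 by positivity),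
      div_le_one (by positivity), abs_le]
    constructor <;> nlinarith [sq_nonneg v]
  have hint : IntegrableOn
      (fun v => -(gaussKernel v * ((v ^ 4 + 4 * v ^ 2 - 4) / (v ^ 2 + 2) ^ 2))) (Ioi t) := by
    refine integrable_gaussKernel.integrableOn.mono' ?_ (Eventually.of_forall fun v => ?_)
    · exact (continuous_gaussKernel.measurable.mul (by fun_prop)).neg.aestronglyMeasurable
    · rw [norm_neg, norm_mul, norm_of_nonneg (gaussKernel_pos v).le, Real.norm_eq_abs]
      exact mul_le_of_le_one_right (gaussKernel_pos v).le (hq_le v)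
  refine le_setIntegral_Ioi_of_hasDerivAt (fun v _ => hderiv v) hint
    (tendsto_mul_gaussKernel_of_le_two_div fun v hv => ⟨by positivity, ?_⟩)
    integrable_gaussKernel.integrableOn fun v _ => ?_
  · rw [div_le_div_iff₀ (by positivity) hv]; nlinarith
  · rw [neg_neg]
    exact mul_le_of_le_one_right (gaussKernel_pos v).le ((le_abs_self _).trans (hq_le v))

lemma tendsto_gaussTail_atTop : Tendsto gaussTail atTop (𝓝 0) := by
  refine squeeze_zero' (g := fun t => 2 / t) (Eventually.of_forall fun t => (gaussTail_pos t).le)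
    ?_ ((tendsto_const_nhds (x := (2 : ℝ))).div_atTop tendsto_id)
  filter_upwards [eventually_gt_atTop 0] with t ht
  exact (gaussTail_le t ht).trans (mul_le_of_le_one_right (by positivity) (gaussKernel_le_one t))

lemma Efun_eq_gaussTail (s : ℝ) : Efun s = (√(4 * π))⁻¹ * gaussTail (-s) := by
  have hshift := (measurePreserving_add_right volume (-s)).setIntegral_preimage_emb
    (measurableEmbedding_addRight _) gaussKernel (Ioi (-s))
  simp only [preimage_add_const_Ioi, sub_self] at hshift
  rw [Efun, gaussTail, ← hshift, sqrt_eq_rpow, ← rpow_neg (by positivity)]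
  congr 1
  · norm_num
  · refine setIntegral_congr_fun measurableSet_Ioi fun s' _ => ?_
    simp only [gaussKernel]; ring_nf

lemma Efun_add_Efun_neg (s : ℝ) : Efun s + Efun (-s) = 1 := by
  rw [Efun_eq_gaussTail, Efun_eq_gaussTail, neg_neg, ← mul_add, add_comm,
    gaussTail_add_gaussTail_neg, inv_mul_cancel₀ (by positivity)]

lemma Efun_pos (s : ℝ) : 0 < Efun s := by
  rw [Efun_eq_gaussTail]; have := gaussTail_pos (-s); positivity

lemma Efun_lt_one (s : ℝ) : Efun s < 1 := by
  linarith [Efun_add_Efun_neg s, Efun_pos (-s)]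

lemma Efun_strictMono : StrictMono Efun := fun s u h => by
  rw [Efun_eq_gaussTail, Efun_eq_gaussTail]
  exact mul_lt_mul_of_pos_left (gaussTail_strictAnti (neg_lt_neg h)) (by positivity)

lemma continuous_Efun : Continuous Efun := by
  simp_rw [funext Efun_eq_gaussTail]
  exact continuous_const.mul (continuous_gaussTail.comp continuous_neg)

lemma tendsto_Efun_atBot : Tendsto Efun atBot (𝓝 0) := by
  simp_rw [funext Efun_eq_gaussTail]
  simpa using (tendsto_gaussTail_atTop.comp tendsto_neg_atBot_atTop).const_mul (√(4 * π))⁻¹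

lemma tendsto_Efun_atTop : Tendsto Efun atTop (𝓝 1) := by
  have h : Efun = fun s => 1 - Efun (-s) := funext fun s => by linarith [Efun_add_Efun_neg s]
  rw [h]
  simpa using (tendsto_Efun_atBot.comp tendsto_neg_atTop_atBot).const_sub 1

lemma exists_Efun_eq {r : ℝ} (hr : r ∈ Ioo 0 1) : ∃ s, Efun s = r := by
  obtain ⟨s₀, hs₀⟩ := (tendsto_Efun_atBot.eventually (gt_mem_nhds hr.1)).exists
  obtain ⟨s₁, hs₁⟩ := (tendsto_Efun_atTop.eventually (lt_mem_nhds hr.2)).exists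
  exact intermediate_value_univ s₀ s₁ continuous_Efun ⟨hs₀.le, hs₁.le⟩

lemma Hfun_Efun (s : ℝ) : Hfun (Efun s) = s :=
  Function.leftInverse_invFun Efun_strictMono.injective s

lemma Efun_Hfun {r : ℝ} (hr : r ∈ Ioo 0 1) : Efun (Hfun r) = r :=
  Function.invFun_eq (exists_Efun_eq hr)

lemma Ha_mul_Efun {a : ℝ} (ha : 0 < a) (s : ℝ) : Ha a (a * Efun s) = s := by
  rw [Ha, if_pos (mul_pos ha (Efun_pos s)), if_neg (EReal.coe_ne_top a), EReal.toReal_coe,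
    mul_div_cancel_left₀ _ ha.ne', Hfun_Efun]

section Concavity

variable {V : Type*} [AddCommGroup V] [Module ℝ V] {Ω : Set V} {f : V → ℝ}

lemma FConcaveOn.pos_and_log_le (hlc : FConcaveOn Ω elog f) {x y : V} (hx : x ∈ Ω) (hy : y ∈ Ω)
    {τ : ℝ} (hτ : τ ∈ Ioo 0 1) (hfx : 0 < f x) (hfy : 0 < f y) :
    0 < f ((1 - τ) • x + τ • y) ∧
      (1 - τ) * log (f x) + τ * log (f y) ≤ log (f ((1 - τ) • x + τ • y)) := by
  have h := hlc x hx y hy τ hτ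
  simp only [elog, if_pos hfx, if_pos hfy, ← EReal.coe_mul, ← EReal.coe_add] at h
  by_cases hz : 0 < f ((1 - τ) • x + τ • y)
  · rw [if_pos hz, EReal.coe_le_coe_iff] at h
    exact ⟨hz, h⟩
  · rw [if_neg hz, le_bot_iff] at h
    exact absurd h (EReal.coe_ne_bot _)

lemma Ha_zero (a : EReal) : Ha a 0 = ⊥ := by simp [Ha]

lemma FConcaveOn.Ha_mul_Efun_comp_log (hlc : FConcaveOn Ω elog f) {a : ℝ} (ha : 0 < a)
    {φ : ℝ → ℝ} (hφ : ConcaveOn ℝ univ φ) (hφ_mono : Monotone φ) :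
    FConcaveOn Ω (Ha a) fun x => if 0 < f x then a * Efun (φ (log (f x))) else 0 := by
  intro x hx y hy τ hτ
  by_cases hfx : 0 < f x
  · by_cases hfy : 0 < f y
    · obtain ⟨hfz, hlog⟩ := hlc.pos_and_log_le hx hy hτ hfx hfy
      simp only [if_pos hfx, if_pos hfy, if_pos hfz, Ha_mul_Efun ha, ← EReal.coe_mul,
        ← EReal.coe_add, EReal.coe_le_coe_iff]
      calc (1 - τ) * φ (log (f x)) + τ * φ (log (f y))
          ≤ φ ((1 - τ) * log (f x) + τ * log (f y)) :=
            hφ.2 (mem_univ _) (mem_univ _) (by linarith [hτ.2]) hτ.1.le (by ring)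
        _ ≤ φ (log (f ((1 - τ) • x + τ • y))) := hφ_mono hlog
    · simp only [if_neg hfy, Ha_zero, EReal.coe_mul_bot_of_pos hτ.1, EReal.add_bot, bot_le]
  · simp only [if_neg hfx, Ha_zero, EReal.coe_mul_bot_of_pos (sub_pos.2 hτ.2), EReal.bot_add,
      bot_le]

end Concavity

def millsRatio (t : ℝ) : ℝ := gaussTail t / gaussKernel t

lemma millsRatio_pos (t : ℝ) : 0 < millsRatio t :=
  div_pos (gaussTail_pos t) (gaussKernel_pos t)

lemma le_millsRatio (t : ℝ) : 2 * t / (t ^ 2 + 2) ≤ millsRatio t :=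
  (le_div_iff₀ (gaussKernel_pos t)).2 (le_gaussTail t)

lemma millsRatio_le {t : ℝ} (ht : 0 < t) : millsRatio t ≤ 2 / t :=
  (div_le_iff₀ (gaussKernel_pos t)).2 (gaussTail_le t ht)

lemma gaussTail_add_millsRatio_mul_le {t Δ M : ℝ} (ht : 0 < t) (hΔ : 0 ≤ Δ) (hΔM : Δ ≤ M) :
    gaussTail (t + millsRatio t * Δ) ≤
      (1 + 2 * t⁻¹ ^ 2) * exp (2 * M * t⁻¹ ^ 2) * exp (-Δ) * gaussTail t := by
  set d := millsRatio t * Δ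
  have hd : 2 * t / (t ^ 2 + 2) * Δ ≤ d := mul_le_mul_of_nonneg_right (le_millsRatio t) hΔ
  have hd0 : 0 ≤ d := mul_nonneg (millsRatio_pos t).le hΔ
  have hkernel : 2 / t * gaussKernel t ≤ (1 + 2 * t⁻¹ ^ 2) * gaussTail t := by
    have h := mul_le_mul_of_nonneg_left (le_gaussTail t) (show 0 ≤ 1 + 2 * t⁻¹ ^ 2 by positivity)
    refine (le_of_eq ?_).trans h
    field_simp
  have hexp : -(2 * t * d + d ^ 2) / 4 ≤ -Δ + 2 * M * t⁻¹ ^ 2 := by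
    have h1 : Δ - t * (2 * t / (t ^ 2 + 2) * Δ) / 2 ≤ 2 * M * t⁻¹ ^ 2 := by
      rw [show Δ - t * (2 * t / (t ^ 2 + 2) * Δ) / 2 = 2 * Δ / (t ^ 2 + 2) by field_simp; ring,
        div_le_iff₀ (by positivity)]
      field_simp
      nlinarith
    nlinarith [mul_le_mul_of_nonneg_left hd ht.le]
  calc gaussTail (t + d) ≤ 2 / (t + d) * gaussKernel (t + d) := gaussTail_le _ (by positivity)
    _ = 2 / (t + d) * gaussKernel t * exp (-(2 * t * d + d ^ 2) / 4) := by
        rw [gaussKernel_add]; ring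
    _ ≤ 2 / t * gaussKernel t * exp (-Δ + 2 * M * t⁻¹ ^ 2) := by
        have := gaussKernel_pos t
        gcongr
        linarith
    _ ≤ (1 + 2 * t⁻¹ ^ 2) * gaussTail t * exp (-Δ + 2 * M * t⁻¹ ^ 2) := by gcongr
    _ = (1 + 2 * t⁻¹ ^ 2) * exp (2 * M * t⁻¹ ^ 2) * exp (-Δ) * gaussTail t := by
        rw [exp_add]; ring

lemma le_gaussTail_add_millsRatio_mul {t Δ M : ℝ} (ht : 0 < t) (hΔ : 0 ≤ Δ) (hΔM : Δ ≤ M) :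
    exp (-(M ^ 2 * t⁻¹ ^ 2)) / ((1 + 2 * M * t⁻¹ ^ 2) ^ 2 + 2 * t⁻¹ ^ 2) * exp (-Δ) * gaussTail t
      ≤ gaussTail (t + millsRatio t * Δ) := by
  set d := millsRatio t * Δ
  have hd : d ≤ 2 * M / t :=
    (mul_le_mul (millsRatio_le ht) hΔM hΔ (by positivity)).trans_eq (by ring)
  have hd0 : 0 ≤ d := mul_nonneg (millsRatio_pos t).le hΔ
  have htd : t * d ≤ 2 * Δ :=
    (mul_le_mul_of_nonneg_left (mul_le_mul_of_nonneg_right (millsRatio_le ht) hΔ) ht.le).trans_eq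
      (by field_simp)
  have hkernel : t / 2 * gaussTail t ≤ gaussKernel t := by
    have := gaussTail_le t ht
    rw [div_mul_eq_mul_div, div_le_iff₀ two_pos]
    calc t * gaussTail t ≤ t * (2 / t * gaussKernel t) := by gcongr
      _ = gaussKernel t * 2 := by field_simp
  have hexp : -Δ - M ^ 2 * t⁻¹ ^ 2 ≤ -(2 * t * d + d ^ 2) / 4 := by
    have : d ^ 2 ≤ 4 * (M ^ 2 * t⁻¹ ^ 2) :=
      (pow_le_pow_left₀ hd0 hd 2).trans_eq (by field_simp; ring)
    linarith
  have hfrac : 2 / t / ((1 + 2 * M * t⁻¹ ^ 2) ^ 2 + 2 * t⁻¹ ^ 2) ≤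
      2 * (t + d) / ((t + d) ^ 2 + 2) := by
    rw [show 2 / t / ((1 + 2 * M * t⁻¹ ^ 2) ^ 2 + 2 * t⁻¹ ^ 2) = 2 * t / ((t + 2 * M / t) ^ 2 + 2)
      by field_simp]
    apply div_le_div₀ (by positivity) (by linarith) (by positivity)
    nlinarith
  calc exp (-(M ^ 2 * t⁻¹ ^ 2)) / ((1 + 2 * M * t⁻¹ ^ 2) ^ 2 + 2 * t⁻¹ ^ 2) * exp (-Δ)
        * gaussTail t
      = 2 / t / ((1 + 2 * M * t⁻¹ ^ 2) ^ 2 + 2 * t⁻¹ ^ 2) * (t / 2 * gaussTail t)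
        * exp (-Δ - M ^ 2 * t⁻¹ ^ 2) := by
        rw [sub_eq_add_neg, exp_add]; field_simp
    _ ≤ 2 * (t + d) / ((t + d) ^ 2 + 2) * gaussKernel t * exp (-(2 * t * d + d ^ 2) / 4) := by
        have := gaussTail_pos t
        have := gaussKernel_pos t
        gcongr
    _ = 2 * (t + d) / ((t + d) ^ 2 + 2) * gaussKernel (t + d) := by
        rw [gaussKernel_add]; ring
    _ ≤ gaussTail (t + d) := le_gaussTail _

lemma tendstoUniformlyOn_gaussTail_ratio_Icc (M : ℝ) :
    TendstoUniformlyOn (fun t Δ => gaussTail (t + millsRatio t * Δ) / gaussTail t)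
      (fun Δ => exp (-Δ)) atTop (Icc 0 M) := by
  have hlim {φ : ℝ → ℝ} (hφ : Continuous φ) (h0 : φ 0 = 1) :
      Tendsto (fun t : ℝ => φ t⁻¹) atTop (𝓝 1) :=
    h0 ▸ (hφ.tendsto 0).comp tendsto_inv_atTop_zero
  have hU := hlim (φ := fun s => (1 + 2 * s ^ 2) * exp (2 * M * s ^ 2)) (by fun_prop) (by simp)
  have hL := hlim (φ := fun s => exp (-(M ^ 2 * s ^ 2)) / ((1 + 2 * M * s ^ 2) ^ 2 + 2 * s ^ 2))
    (.div (by fun_prop) (by fun_prop) fun s => by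
      rcases eq_or_ne s 0 with rfl | hs
      · norm_num
      · positivity) (by simp)
  rw [Metric.tendstoUniformlyOn_iff]
  intro ε hε
  filter_upwards [hU.eventually (gt_mem_nhds (lt_add_of_pos_right 1 hε)),
    hL.eventually (lt_mem_nhds (sub_lt_self 1 hε)), eventually_gt_atTop 0]
    with t hUt hLt ht Δ ⟨hΔ, hΔM⟩
  have hG := gaussTail_pos t
  have he : 0 < exp (-Δ) := exp_pos _
  have he1 : exp (-Δ) ≤ 1 := exp_le_one_iff.2 (neg_nonpos.2 hΔ)
  have hup := gaussTail_add_millsRatio_mul_le ht hΔ hΔM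
  have hlow := le_gaussTail_add_millsRatio_mul ht hΔ hΔM
  rw [← div_le_iff₀ hG] at hup
  rw [← le_div_iff₀ hG] at hlow
  rw [dist_comm, dist_eq, abs_sub_lt_iff]
  constructor
  · nlinarith [mul_lt_mul_of_pos_right hUt he]
  · nlinarith [mul_lt_mul_of_pos_right hLt he]

lemma tendstoUniformlyOn_gaussTail_ratio :
    TendstoUniformlyOn (fun t Δ => gaussTail (t + millsRatio t * Δ) / gaussTail t)
      (fun Δ => exp (-Δ)) atTop (Ici 0) := by
  rw [Metric.tendstoUniformlyOn_iff]
  intro ε hε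
  obtain ⟨M, hM, hM0⟩ := ((tendsto_exp_neg_atTop_nhds_zero.eventually
    (gt_mem_nhds (half_pos hε))).and (eventually_ge_atTop 0)).exists
  filter_upwards [Metric.tendstoUniformlyOn_iff.1 (tendstoUniformlyOn_gaussTail_ratio_Icc M)
    (ε / 2) (half_pos hε)] with t ht Δ (hΔ : 0 ≤ Δ)
  rcases le_or_gt Δ M with hΔM | hΔM
  · exact (ht Δ ⟨hΔ, hΔM⟩).trans (half_lt_self hε)
  · have hG := gaussTail_pos t
    have hmono : gaussTail (t + millsRatio t * Δ) ≤ gaussTail (t + millsRatio t * M) :=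
      gaussTail_strictAnti.antitone (by gcongr; exact (millsRatio_pos t).le)
    have hM' := ht M ⟨hM0, le_rfl⟩
    have hexp : exp (-Δ) ≤ exp (-M) := exp_le_exp.2 (by linarith)
    have hpos : 0 < gaussTail (t + millsRatio t * Δ) / gaussTail t :=
      div_pos (gaussTail_pos _) hG
    rw [dist_eq, abs_sub_lt_iff] at hM' ⊢
    have := div_le_div_of_nonneg_right hmono hG.le
    constructor <;> linarith [exp_pos (-Δ)]

section TangentApprox

variable {V : Type*} {B a : ℝ} {f : V → ℝ}

/-- For `a ≤ B`, `Hfun (B / a)` is a junk value; this is harmless, as only large `a` matter. -/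
def tangentApprox (B : ℝ) (f : V → ℝ) (a : ℝ) (x : V) : ℝ :=
  if 0 < f x then
    a * Efun (millsRatio (-Hfun (B / a)) * (log (f x) - log B) + Hfun (B / a))
  else 0

lemma tangentApprox_mem_Ico (ha : 0 < a) (x : V) : tangentApprox B f a x ∈ Ico 0 a := by
  unfold tangentApprox
  split_ifs
  · constructor
    · exact (mul_pos ha (Efun_pos _)).le
    · exact mul_lt_of_lt_one_right ha (Efun_lt_one _)
  · exact ⟨le_rfl, ha⟩

lemma FConcaveOn.Ha_tangentApprox [AddCommGroup V] [Module ℝ V] {Ω : Set V}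
    (hlc : FConcaveOn Ω elog f) (ha : 0 < a) : FConcaveOn Ω (Ha a) (tangentApprox B f a) := by
  have hm := millsRatio_pos (-Hfun (B / a))
  refine hlc.Ha_mul_Efun_comp_log ha
    (φ := fun u => millsRatio (-Hfun (B / a)) * (u - log B) + Hfun (B / a)) ?_
    fun u v huv => by dsimp only; gcongr
  refine ⟨convex_univ, fun u _ v _ p q _ _ hpq => le_of_eq ?_⟩
  simp only [smul_eq_mul]
  linear_combination (Hfun (B / a) - millsRatio (-Hfun (B / a)) * log B) * hpq

lemma tangentApprox_eq (hB : 0 < B) (hBa : B < a) {x : V} (hfx : 0 < f x) :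
    tangentApprox B f a x = B * (gaussTail (-Hfun (B / a) + millsRatio (-Hfun (B / a)) *
      (log B - log (f x))) / gaussTail (-Hfun (B / a))) := by
  have ha : 0 < a := hB.trans hBa
  have hBa' : B / a ∈ Ioo 0 1 := ⟨div_pos hB ha, (div_lt_one ha).2 hBa⟩
  have hB_eq : a * (√(4 * π))⁻¹ = B / gaussTail (-Hfun (B / a)) := by
    rw [eq_div_iff (gaussTail_pos _).ne', mul_assoc, ← Efun_eq_gaussTail, Efun_Hfun hBa',
      mul_div_cancel₀ _ ha.ne']
  rw [tangentApprox, if_pos hfx, Efun_eq_gaussTail, ← mul_assoc, hB_eq]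
  ring_nf

lemma tendsto_neg_Hfun_div (hB : 0 < B) : Tendsto (fun a => -Hfun (B / a)) atTop atTop := by
  refine tendsto_atTop.2 fun T => ?_
  have hB_div : Tendsto (fun a => B / a) atTop (𝓝 0) := tendsto_const_nhds.div_atTop tendsto_id
  filter_upwards [hB_div.eventually (gt_mem_nhds (Efun_pos (-T))),
    hB_div.eventually (gt_mem_nhds one_pos), eventually_gt_atTop 0] with a hlt hlt_one ha
  rw [← Efun_Hfun ⟨div_pos hB ha, hlt_one⟩] at hlt
  linarith [Efun_strictMono.lt_iff_lt.1 hlt]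

lemma tendstoUniformlyOn_tangentApprox {s : Set V} (hB : 0 < B) (hf0 : ∀ x ∈ s, 0 ≤ f x)
    (hfB : ∀ x ∈ s, f x ≤ B) : TendstoUniformlyOn (tangentApprox B f) f atTop s := by
  rw [Metric.tendstoUniformlyOn_iff]
  intro ε hε
  filter_upwards [(tendsto_neg_Hfun_div hB).eventually (Metric.tendstoUniformlyOn_iff.1
    tendstoUniformlyOn_gaussTail_ratio (ε / B) (div_pos hε hB)), eventually_gt_atTop B]
    with a hratio hBa x hx
  by_cases hfx : 0 < f x
  · have hΔ : 0 ≤ log B - log (f x) := sub_nonneg.2 (log_le_log hfx (hfB x hx))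
    have hf_eq : f x = B * exp (-(log B - log (f x))) := by
      rw [neg_sub, exp_sub, exp_log hfx, exp_log hB]; field_simp
    have hclose := hratio _ hΔ
    rw [Real.dist_eq, lt_div_iff₀' hB] at hclose
    rw [tangentApprox_eq hB hBa hfx, Real.dist_eq]
    nth_rw 1 [hf_eq]
    rwa [← mul_sub, abs_mul, abs_of_pos hB]
  · have hfx0 : f x = 0 := le_antisymm (not_lt.1 hfx) (hf0 x hx)
    simp [tangentApprox, hfx0, hε]

end TangentApprox

theorem stmt7_general (n : ℕ)
    (Ω : Set (Euc n))
    (f : Euc n → ℝ) (hf0 : ∀ x ∈ Ω, 0 ≤ f x) (hfb : ∃ C : ℝ, ∀ x ∈ Ω, f x ≤ C)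
    (hlc : FConcaveOn Ω elog f) :
    ∃ fa : ℝ → Euc n → ℝ,
      (∀ a : ℝ, 0 < a →
        (∀ x ∈ Ω, 0 ≤ fa a x ∧ fa a x < a) ∧ FConcaveOn Ω (Ha (a : EReal)) (fa a)) ∧
      TendstoUniformlyOn fa f Filter.atTop Ω := by
  obtain ⟨C, hC⟩ := hfb
  have hfB : ∀ x ∈ Ω, f x ≤ max C 1 := fun x hx => (hC x hx).trans (le_max_left C 1)
  exact ⟨tangentApprox (max C 1) f,
    fun a ha => ⟨fun x _ => tangentApprox_mem_Ico ha x, hlc.Ha_tangentApprox ha⟩,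
    tendstoUniformlyOn_tangentApprox (lt_max_of_lt_right one_pos) hf0 hfB⟩

/-- any bounded log-concave function on a nonempty open convex `Ω ⊆ ℝⁿ` is the
uniform limit as `a → ∞` of `H_a`-concave functions. -/
theorem stmt7 (n : ℕ) (hn : 1 ≤ n)
    (Ω : Set (Euc n)) (hne : Ω.Nonempty) (hop : IsOpen Ω) (hconv : Convex ℝ Ω)
    (f : Euc n → ℝ) (hf0 : ∀ x ∈ Ω, 0 ≤ f x) (hfb : ∃ C : ℝ, ∀ x ∈ Ω, f x ≤ C)
    (hlc : FConcaveOn Ω elog f) :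
    ∃ fa : ℝ → Euc n → ℝ,
      (∀ a : ℝ, 0 < a →
        (∀ x ∈ Ω, 0 ≤ fa a x ∧ fa a x < a) ∧ FConcaveOn Ω (Ha (a : EReal)) (fa a)) ∧
      TendstoUniformlyOn fa f Filter.atTop Ω :=
  stmt7_general n Ω f hf0 hfb hlc
end
end
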